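/- All of the following operators belong to V, and together they form a basis of the real vector space V: for each p with 1 ≤ p ≤ n+1, the operator S_p defined by (S_p X)_p = x_p and (S_p X)_s = 0 for s ≠ p; and for each pair 1 ≤ i < j ≤ n+1 and each u ∈ {1, i, j, k} ⊂ ℍ, the operator S_{ij}(u) defined by (S_{ij}(u) X)_i = u · x_j, (S_{ij}(u) X)_j = u* · x_i, and (S_{ij}(u) X)_s = 0 for s ∉ {i, j} (left multiplication by u and by its conjugate u* in the respective components). -/

import Mathlib

open scoped Quaternion RealInnerProductSpace

noncomputable section

/-- `E n = ℍ^{n+1}` as a real inner product space. -/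
abbrev E (n : ℕ) := PiLp 2 (fun _ : Fin (n + 1) => ℍ)

/-- Componentwise right multiplication by the quaternion `q`, as a real-linear map. -/
def Rmul (n : ℕ) (q : ℍ) : E n →ₗ[ℝ] E n where
  toFun X := WithLp.toLp 2 (fun s => X s * q)
  map_add' X Y := by ext1 s; simp [add_mul]
  map_smul' c X := by ext1 s; simp [smul_mul_assoc]

/-- The three complex structures `J₁, J₂, J₃ = J₁ ∘ J₂`. -/
def Js (n : ℕ) : Fin 3 → (E n →ₗ[ℝ] E n) :=
  ![Rmul n ⟨0, 1, 0, 0⟩, Rmul n ⟨0, 0, 1, 0⟩, Rmul n ⟨0, 1, 0, 0⟩ ∘ₗ Rmul n ⟨0, 0, 1, 0⟩]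

/-- `S` belongs to `V`: it is self-adjoint and commutes with `J₁, J₂, J₃`. -/
def InV (n : ℕ) (S : E n →ₗ[ℝ] E n) : Prop :=
  (∀ X Y : E n, ⟪S X, Y⟫ = ⟪X, S Y⟫) ∧
    (∀ α : Fin 3, S ∘ₗ Js n α = Js n α ∘ₗ S)

/-- The quadrilinear form `T_S`. -/
def T (n : ℕ) (S : E n →ₗ[ℝ] E n) (X Y P Q : E n) : ℝ :=
  (1 / 2) * ∑ α : Fin 3,
    (⟪S (Js n α X), P⟫ * ⟪S (Js n α Y), Q⟫ +
      ⟪S (Js n α X), Q⟫ * ⟪S (Js n α Y), P⟫)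
/-- `V` as a submodule of the real endomorphisms of `E n`. -/
def Vsub (n : ℕ) : Submodule ℝ (E n →ₗ[ℝ] E n) where
  carrier := {S | InV n S}
  add_mem' := by
    rintro S S' ⟨hS, hScomm⟩ ⟨hS', hS'comm⟩
    refine ⟨fun X Y => ?_, fun α => ?_⟩
    · simp only [LinearMap.add_apply, inner_add_left, inner_add_right, hS X Y, hS' X Y]
    · rw [LinearMap.add_comp, LinearMap.comp_add, hScomm α, hS'comm α]
  zero_mem' := by
    refine ⟨fun X Y => ?_, fun α => ?_⟩
    · simp
    · rw [LinearMap.zero_comp, LinearMap.comp_zero]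
  smul_mem' := by
    rintro c S ⟨hS, hScomm⟩
    refine ⟨fun X Y => ?_, fun α => ?_⟩
    · simp only [LinearMap.smul_apply, real_inner_smul_left, real_inner_smul_right, hS X Y]
    · rw [LinearMap.smul_comp, LinearMap.comp_smul, hScomm α]
/-- The operator `S_p`: `(S_p X)_p = x_p`, zero in the other components. -/
def Sdiag (n : ℕ) (p : Fin (n + 1)) : E n →ₗ[ℝ] E n where
  toFun X := WithLp.toLp 2 (fun s => if s = p then X p else 0)
  map_add' X Y := by ext1 s; by_cases h : s = p <;> simp [h, PiLp.add_apply]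
  map_smul' c X := by ext1 s; by_cases h : s = p <;> simp [h, PiLp.smul_apply]

/-- The operator `S_{ij}(u)`: `(S_{ij}(u) X)_i = u · x_j`, `(S_{ij}(u) X)_j = u* · x_i`,
zero in the other components. -/
def Soff (n : ℕ) (i j : Fin (n + 1)) (u : ℍ) : E n →ₗ[ℝ] E n where
  toFun X := WithLp.toLp 2 (fun s => if s = i then u * X j else if s = j then star u * X i else 0)
  map_add' X Y := by
    ext1 s
    by_cases h : s = i <;> by_cases h' : s = j <;>
      simp [h, h', PiLp.add_apply, mul_add] <;> (try split) <;> simp [mul_add]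
  map_smul' c X := by
    ext1 s
    by_cases h : s = i <;> by_cases h' : s = j <;>
      simp [h, h', PiLp.smul_apply, mul_smul_comm] <;> (try split) <;> simp [mul_smul_comm]

/-- The quaternion units `1, i, j, k`. -/
def units4 : Fin 4 → ℍ := ![1, ⟨0, 1, 0, 0⟩, ⟨0, 0, 1, 0⟩, ⟨0, 0, 0, 1⟩]

/-- The index set of the claimed basis of `V`. -/
abbrev BIdx (n : ℕ) :=
  Fin (n + 1) ⊕ ({p : Fin (n + 1) × Fin (n + 1) // p.1 < p.2} × Fin 4)

/-- The claimed basis family of `V`: the operators `S_p` for `1 ≤ p ≤ n+1` and the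
operators `S_{ij}(u)` for `1 ≤ i < j ≤ n+1`, `u ∈ {1, i, j, k}`. -/
def famB (n : ℕ) : BIdx n → (E n →ₗ[ℝ] E n)
  | .inl p => Sdiag n p
  | .inr (⟨(i, j), _⟩, u) => Soff n i j (units4 u)


-- helpers
lemma re_mul_comm (a b : ℍ) : (a*b).re = (b*a).re := by
  simp [Quaternion.re_mul]; ring

lemma inner_mul_left' (a b c : ℍ) : ⟪a * b, c⟫ = ⟪b, star a * c⟫ := by
  simp only [Quaternion.inner_def, StarMul.star_mul, star_star]
  rw [mul_assoc, re_mul_comm a (b * star c), mul_assoc]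

/-- basis vector with value q in slot t -/
def eb (n : ℕ) (t : Fin (n + 1)) (q : ℍ) : E n := WithLp.toLp 2 (fun s => if s = t then q else 0)

lemma pisum_apply {ι : Type*} (sf : Finset ι) (f : ι → E n) (s : Fin (n+1)) :
    (∑ i ∈ sf, f i) s = ∑ i ∈ sf, f i s := by
  rw [WithLp.ofLp_sum, Finset.sum_apply]

lemma inner_E (n : ℕ) (X Y : E n) : ⟪X, Y⟫ = ∑ s, ⟪X s, Y s⟫ := PiLp.inner_apply X Y

lemma sum_pair {M : Type*} [AddCommMonoid M] {m : ℕ} {i j : Fin m} (h : i ≠ j) (a b : M) :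
    ∑ s : Fin m, (if s = i then a else if s = j then b else 0) = a + b := by
  have : ∀ s : Fin m, (if s = i then a else if s = j then b else 0)
      = (if s = i then a else 0) + (if s = j then b else 0) := by
    intro s; split_ifs <;> simp_all
  rw [Finset.sum_congr rfl fun s _ => this s, Finset.sum_add_distrib,
    Finset.sum_ite_eq' Finset.univ i (fun _ => a), Finset.sum_ite_eq' Finset.univ j (fun _ => b)]
  simp

lemma Sdiag_apply (n : ℕ) (p : Fin (n+1)) (X : E n) (s : Fin (n+1)) :
    Sdiag n p X s = if s = p then X p else 0 := rfl

lemma Soff_apply (n : ℕ) (i j : Fin (n+1)) (u : ℍ) (X : E n) (s : Fin (n+1)) :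
    Soff n i j u X s = if s = i then u * X j else if s = j then star u * X i else 0 := rfl

lemma Rmul_apply (n : ℕ) (q : ℍ) (X : E n) (s : Fin (n+1)) : Rmul n q X s = X s * q := rfl

lemma eb_apply (n : ℕ) (t : Fin (n+1)) (q : ℍ) (s : Fin (n+1)) :
    eb n t q s = if s = t then q else 0 := rfl

lemma Sdiag_comm (n : ℕ) (p : Fin (n+1)) (q : ℍ) :
    Sdiag n p ∘ₗ Rmul n q = Rmul n q ∘ₗ Sdiag n p := by
  apply LinearMap.ext; intro X; ext1 s
  show (if s = p then X p * q else 0) = (if s = p then X p else 0) * q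
  split_ifs <;> simp

lemma Soff_comm (n : ℕ) (i j : Fin (n+1)) (u q : ℍ) :
    Soff n i j u ∘ₗ Rmul n q = Rmul n q ∘ₗ Soff n i j u := by
  apply LinearMap.ext; intro X; ext1 s
  show (if s = i then u * (X j * q) else if s = j then star u * (X i * q) else 0)
    = (if s = i then u * X j else if s = j then star u * X i else 0) * q
  split_ifs <;> simp [mul_assoc]

lemma comm_Js_of_comm_Rmul (n : ℕ) (S : E n →ₗ[ℝ] E n)
    (h : ∀ q : ℍ, S ∘ₗ Rmul n q = Rmul n q ∘ₗ S) :
    ∀ α : Fin 3, S ∘ₗ Js n α = Js n α ∘ₗ S := by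
  intro α
  fin_cases α
  · exact h ⟨0,1,0,0⟩
  · exact h ⟨0,0,1,0⟩
  · show S ∘ₗ (Rmul n ⟨0,1,0,0⟩ ∘ₗ Rmul n ⟨0,0,1,0⟩) = (Rmul n ⟨0,1,0,0⟩ ∘ₗ Rmul n ⟨0,0,1,0⟩) ∘ₗ S
    have h1 := h ⟨0,1,0,0⟩
    have h2 := h ⟨0,0,1,0⟩
    rw [← LinearMap.comp_assoc, h1, LinearMap.comp_assoc, h2, LinearMap.comp_assoc]

lemma Sdiag_mem (n : ℕ) (p : Fin (n+1)) : Sdiag n p ∈ Vsub n := by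
  constructor
  · intro X Y
    rw [inner_E, inner_E]
    apply Finset.sum_congr rfl
    intro s _
    rw [Sdiag_apply, Sdiag_apply]
    split_ifs with h
    · subst h; rfl
    · simp
  · exact comm_Js_of_comm_Rmul n _ (fun q => Sdiag_comm n p q)

lemma Soff_mem (n : ℕ) (i j : Fin (n+1)) (u : ℍ) (hij : i ≠ j) : Soff n i j u ∈ Vsub n := by
  constructor
  · intro X Y
    rw [inner_E, inner_E]
    have hL : ∀ s, ⟪Soff n i j u X s, Y s⟫
        = (if s = i then ⟪u * X j, Y i⟫ else if s = j then ⟪star u * X i, Y j⟫ else 0) := by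
      intro s
      rw [Soff_apply]
      split_ifs with h1 h2
      · subst h1; rfl
      · subst h2; rfl
      · simp
    have hR : ∀ s, ⟪X s, Soff n i j u Y s⟫
        = (if s = i then ⟪X i, u * Y j⟫ else if s = j then ⟪X j, star u * Y i⟫ else 0) := by
      intro s
      rw [Soff_apply]
      split_ifs with h1 h2
      · subst h1; rfl
      · subst h2; rfl
      · simp
    rw [Finset.sum_congr rfl fun s _ => hL s, Finset.sum_congr rfl fun s _ => hR s,
      sum_pair hij, sum_pair hij]
    rw [inner_mul_left' u (X j) (Y i), inner_mul_left' (star u) (X i) (Y j), star_star]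
    exact add_comm _ _
  · exact comm_Js_of_comm_Rmul n _ (fun q => Soff_comm n i j u q)

lemma quat_decomp (x q : ℍ) :
    x * q = q.re • x + q.imI • (x * ⟨0,1,0,0⟩) + q.imJ • (x * ⟨0,0,1,0⟩)
      + q.imK • ((x * ⟨0,1,0,0⟩) * ⟨0,0,1,0⟩) := by
  have key : ∀ i j : ℍ, i = ⟨0,1,0,0⟩ → j = ⟨0,0,1,0⟩ → x * q = q.re • x + q.imI • (x * i)
      + q.imJ • (x * j) + q.imK • ((x * i) * j) := by
    intro i j hi hj
    have h1 : i.re = 0 ∧ i.imI = 1 ∧ i.imJ = 0 ∧ i.imK = 0 := by subst hi; exact ⟨rfl, rfl, rfl, rfl⟩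
    have h2 : j.re = 0 ∧ j.imI = 0 ∧ j.imJ = 1 ∧ j.imK = 0 := by subst hj; exact ⟨rfl, rfl, rfl, rfl⟩
    ext <;> simp [Quaternion.re_mul, Quaternion.imI_mul, Quaternion.imJ_mul, Quaternion.imK_mul, h1, h2] <;> ring
  exact key _ _ rfl rfl

lemma comm_Rmul (n : ℕ) (S : E n →ₗ[ℝ] E n)
    (hc : ∀ α : Fin 3, S ∘ₗ Js n α = Js n α ∘ₗ S) (q : ℍ) (X : E n) :
    S (Rmul n q X) = Rmul n q (S X) := by
  have hiX : ∀ Y : E n, S (Rmul n ⟨0,1,0,0⟩ Y) = Rmul n ⟨0,1,0,0⟩ (S Y) :=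
    fun Y => LinearMap.congr_fun (hc 0) Y
  have hjX : ∀ Y : E n, S (Rmul n ⟨0,0,1,0⟩ Y) = Rmul n ⟨0,0,1,0⟩ (S Y) :=
    fun Y => LinearMap.congr_fun (hc 1) Y
  have decomp : ∀ Y : E n, Rmul n q Y = q.re • Y + q.imI • Rmul n ⟨0,1,0,0⟩ Y
      + q.imJ • Rmul n ⟨0,0,1,0⟩ Y + q.imK • Rmul n ⟨0,0,1,0⟩ (Rmul n ⟨0,1,0,0⟩ Y) := by
    intro Y; ext1 s
    exact quat_decomp (Y s) q
  rw [decomp X]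
  simp only [map_add, map_smul, hiX, hjX]
  rw [← decomp (S X)]

lemma repr_lemma (n : ℕ) (S : E n →ₗ[ℝ] E n)
    (hc : ∀ α : Fin 3, S ∘ₗ Js n α = Js n α ∘ₗ S) (X : E n) (s : Fin (n+1)) :
    S X s = ∑ t, S (eb n t 1) s * X t := by
  have hX : X = ∑ t, Rmul n (X t) (eb n t 1) := by
    ext1 w
    rw [pisum_apply]
    have : ∀ t, Rmul n (X t) (eb n t 1) w = if w = t then X t else 0 := by
      intro t
      show (if w = t then (1:ℍ) else 0) * X t = _
      split_ifs <;> simp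
    rw [Finset.sum_congr rfl fun t _ => this t, Finset.sum_ite_eq Finset.univ w X]
    simp
  conv_lhs => rw [hX, map_sum]
  rw [pisum_apply]
  apply Finset.sum_congr rfl
  intro t _
  rw [comm_Rmul n S hc]
  rfl

lemma eb_Rmul (n : ℕ) (t : Fin (n+1)) (q : ℍ) : eb n t q = Rmul n q (eb n t 1) := by
  ext1 s
  show (if s = t then q else 0) = (if s = t then (1:ℍ) else 0) * q
  split_ifs <;> simp

lemma inner_eb_right (n : ℕ) (Z : E n) (s : Fin (n+1)) (p : ℍ) : ⟪Z, eb n s p⟫ = ⟪Z s, p⟫ := by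
  rw [inner_E]
  have : ∀ w, ⟪Z w, eb n s p w⟫ = if w = s then ⟪Z s, p⟫ else 0 := by
    intro w
    rw [eb_apply]
    split_ifs with h
    · subst h; rfl
    · simp
  rw [Finset.sum_congr rfl fun w _ => this w, Finset.sum_ite_eq' Finset.univ s]
  simp

lemma inner_eb_left (n : ℕ) (Z : E n) (s : Fin (n+1)) (p : ℍ) : ⟪eb n s p, Z⟫ = ⟪p, Z s⟫ := by
  rw [real_inner_comm, inner_eb_right, real_inner_comm]

lemma Arel (n : ℕ) (S : E n →ₗ[ℝ] E n) (hS : InV n S) (s t : Fin (n+1)) :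
    star (S (eb n t 1) s) = S (eb n s 1) t := by
  obtain ⟨hsa, hc⟩ := hS
  have key : ∀ q p : ℍ, ⟪q, star (S (eb n t 1) s) * p⟫ = ⟪q, S (eb n s 1) t * p⟫ := by
    intro q p
    rw [← inner_mul_left']
    have h1 : ⟪S (eb n t q), eb n s p⟫ = ⟪S (eb n t 1) s * q, p⟫ := by
      rw [eb_Rmul n t q, comm_Rmul n S hc, inner_eb_right]
      rfl
    have h2 : ⟪eb n t q, S (eb n s p)⟫ = ⟪q, S (eb n s 1) t * p⟫ := by
      rw [eb_Rmul n s p, comm_Rmul n S hc, inner_eb_left]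
      rfl
    rw [← h1, ← h2]
    exact hsa _ _
  have h3 : star (S (eb n t 1) s) * 1 = S (eb n s 1) t * 1 :=
    ext_inner_left ℝ (fun q => key q 1)
  simpa using h3

lemma real_diag (a : ℍ) (h : star a = a) : ((a.re : ℝ) : ℍ) = a := by
  rw [Quaternion.ext_iff] at h ⊢
  simp only [Quaternion.re_star, Quaternion.imI_star, Quaternion.imJ_star,
    Quaternion.imK_star] at h
  simp [Quaternion.re_coe, Quaternion.imI_coe, Quaternion.imJ_coe, Quaternion.imK_coe]
  refine ⟨?_, ?_, ?_⟩ <;> linarith [h.2.1, h.2.2.1, h.2.2.2]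

lemma units_span' (a : ℍ) :
    ∑ u : Fin 4, ![a.re, a.imI, a.imJ, a.imK] u • units4 u = a := by
  rw [Fin.sum_univ_four]
  ext <;> simp <;> simp [units4]

lemma units_span_star (a : ℍ) :
    ∑ u : Fin 4, ![a.re, a.imI, a.imJ, a.imK] u • star (units4 u) = star a := by
  rw [Fin.sum_univ_four]
  ext <;> simp <;> simp [units4]

lemma units_indep (c : Fin 4 → ℝ) (h : ∑ u : Fin 4, c u • units4 u = 0) :
    ∀ u, c u = 0 := by
  rw [Fin.sum_univ_four] at h
  rw [Quaternion.ext_iff] at h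
  simp at h
  simp [units4] at h
  intro u; fin_cases u <;> simp <;> tauto

lemma eval_combo (n : ℕ) (c : BIdx n → ℝ) (t s : Fin (n+1)) :
    (∑ idx : BIdx n, c idx • famB n idx) (eb n t 1) s =
      if hst : s = t then c (.inl t) • (1:ℍ)
      else if h : s < t then ∑ u, c (.inr (⟨(s,t),h⟩,u)) • units4 u
      else if h' : t < s then ∑ u, c (.inr (⟨(t,s),h'⟩,u)) • star (units4 u)
      else 0 := by
  rw [LinearMap.sum_apply, pisum_apply]
  rw [Fintype.sum_sum_type]
  have hdiag : ∑ p, (c (.inl p) • famB n (.inl p)) (eb n t 1) s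
      = if s = t then c (.inl t) • (1:ℍ) else 0 := by
    have : ∀ p, (c (.inl p) • famB n (.inl p)) (eb n t 1) s
        = if s = p then c (.inl p) • (if p = t then (1:ℍ) else 0) else 0 := by
      intro p
      show c (.inl p) • (if s = p then (if p = t then (1:ℍ) else 0) else 0) = _
      split_ifs <;> simp
    rw [Finset.sum_congr rfl fun p _ => this p, Finset.sum_ite_eq Finset.univ s]
    simp only [Finset.mem_univ, if_true]
    split_ifs with h
    · subst h; rfl
    · simp
  rw [hdiag]
  have hval : ∀ (i j : Fin (n+1)) (hij : i < j) (u : Fin 4),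
      famB n (.inr (⟨(i,j),hij⟩,u)) (eb n t 1) s
        = if s = i then units4 u * (if j = t then (1:ℍ) else 0)
          else if s = j then star (units4 u) * (if i = t then (1:ℍ) else 0) else 0 := by
    intro i j hij u; rfl
  by_cases hst : s = t
  · subst hst
    rw [if_pos rfl, dif_pos rfl]
    have : ∑ x : {p : Fin (n+1) × Fin (n+1) // p.1 < p.2} × Fin 4,
        (c (.inr x) • famB n (.inr x)) (eb n s 1) s = 0 := by
      apply Finset.sum_eq_zero
      rintro ⟨⟨⟨i,j⟩,hij⟩,u⟩ -
      show c _ • famB n (.inr (⟨(i,j),hij⟩,u)) (eb n s 1) s = 0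
      rw [hval i j hij u]
      by_cases h1 : s = i
      · have hj : ¬ (j = s) := by
          intro h; rw [h, h1] at hij; exact lt_irrefl _ hij
        rw [if_pos h1, if_neg hj, mul_zero, smul_zero]
      · rw [if_neg h1]
        by_cases h2 : s = j
        · have hi : ¬ (i = s) := by
            intro h; rw [h, h2] at hij; exact lt_irrefl _ hij
          rw [if_pos h2, if_neg hi, mul_zero, smul_zero]
        · rw [if_neg h2, smul_zero]
    rw [this, add_zero]
  · rw [if_neg hst, dif_neg hst]
    rw [Fintype.sum_prod_type]
    by_cases hlt : s < t
    · rw [dif_pos hlt]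
      have hz : ∀ b ∈ (Finset.univ : Finset {p : Fin (n+1) × Fin (n+1) // p.1 < p.2}),
          b ≠ ⟨(s,t),hlt⟩ →
          ∑ u, (c (.inr (b,u)) • famB n (.inr (b,u))) (eb n t 1) s = 0 := by
        rintro ⟨⟨i,j⟩,hij⟩ - hne
        apply Finset.sum_eq_zero
        intro u _
        show c _ • famB n (.inr (⟨(i,j),hij⟩,u)) (eb n t 1) s = 0
        rw [hval i j hij u]
        have hne' : ¬ (i = s ∧ j = t) := by
          rintro ⟨h1, h2⟩; exact hne (by subst h1; subst h2; rfl)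
        by_cases h1 : s = i
        · by_cases h2 : j = t
          · exact absurd ⟨h1.symm, h2⟩ hne'
          · rw [if_pos h1, if_neg h2, mul_zero, smul_zero]
        · rw [if_neg h1]
          by_cases h2 : s = j
          · have hi : ¬ (i = t) := by
              intro h; rw [h, ← h2] at hij; exact absurd hij (asymm hlt)
            rw [if_pos h2, if_neg hi, mul_zero, smul_zero]
          · rw [if_neg h2, smul_zero]
      rw [Finset.sum_eq_single_of_mem _ (Finset.mem_univ _) hz, zero_add]
      apply Finset.sum_congr rfl
      intro u _
      show c _ • famB n (.inr (⟨(s,t),hlt⟩,u)) (eb n t 1) s = _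
      rw [hval s t hlt u, if_pos rfl, if_pos rfl, mul_one]
    · have htlt : t < s := lt_of_le_of_ne (not_lt.mp hlt) (Ne.symm hst)
      rw [dif_neg hlt, dif_pos htlt]
      have hz : ∀ b ∈ (Finset.univ : Finset {p : Fin (n+1) × Fin (n+1) // p.1 < p.2}),
          b ≠ ⟨(t,s),htlt⟩ →
          ∑ u, (c (.inr (b,u)) • famB n (.inr (b,u))) (eb n t 1) s = 0 := by
        rintro ⟨⟨i,j⟩,hij⟩ - hne
        apply Finset.sum_eq_zero
        intro u _
        show c _ • famB n (.inr (⟨(i,j),hij⟩,u)) (eb n t 1) s = 0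
        rw [hval i j hij u]
        have hne' : ¬ (i = t ∧ j = s) := by
          rintro ⟨h1, h2⟩; exact hne (by subst h1; subst h2; rfl)
        by_cases h1 : s = i
        · have h2 : ¬ (j = t) := by
            intro h; rw [h, ← h1] at hij; exact hlt hij
          rw [if_pos h1, if_neg h2, mul_zero, smul_zero]
        · rw [if_neg h1]
          by_cases h2 : s = j
          · by_cases h3 : i = t
            · exact absurd ⟨h3, h2.symm⟩ hne'
            · rw [if_pos h2, if_neg h3, mul_zero, smul_zero]
          · rw [if_neg h2, smul_zero]
      rw [Finset.sum_eq_single_of_mem _ (Finset.mem_univ _) hz, zero_add]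
      apply Finset.sum_congr rfl
      intro u _
      show c _ • famB n (.inr (⟨(t,s),htlt⟩,u)) (eb n t 1) s = _
      rw [hval t s htlt u, if_neg hst, if_pos rfl, if_pos rfl, mul_one]

lemma memB (n : ℕ) : ∀ idx : BIdx n, famB n idx ∈ Vsub n := by
  rintro (p | ⟨⟨⟨i,j⟩,hij⟩,u⟩)
  · exact Sdiag_mem n p
  · exact Soff_mem n i j (units4 u) (ne_of_lt hij)

/-- the operators `S_p` (`1 ≤ p ≤ n+1`) and `S_{ij}(u)`
(`1 ≤ i < j ≤ n+1`, `u ∈ {1, i, j, k}`) all belong to `V` and together they form a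
basis of the real vector space `V`. -/
theorem stmt4 (n : ℕ) :
    (∀ idx : BIdx n, famB n idx ∈ Vsub n) ∧
      LinearIndependent ℝ (famB n) ∧
      Submodule.span ℝ (Set.range (famB n)) = Vsub n := by
  refine ⟨memB n, ?_, ?_⟩
  · rw [Fintype.linearIndependent_iff]
    intro c hc idx
    have hev : ∀ t s : Fin (n+1), (∑ i : BIdx n, c i • famB n i) (eb n t 1) s = 0 := by
      intro t s; rw [hc]; rfl
    cases idx with
    | inl p =>
      have h := hev p p
      rw [eval_combo n c p p, dif_pos rfl] at h
      have := congrArg QuaternionAlgebra.re h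
      simpa using this
    | inr x =>
      obtain ⟨⟨⟨i,j⟩,hij⟩,u⟩ := x
      have h := hev j i
      rw [eval_combo n c j i, dif_neg (ne_of_lt hij), dif_pos hij] at h
      exact units_indep (fun u => c (.inr (⟨(i,j),hij⟩,u))) h u
  · apply le_antisymm
    · rw [Submodule.span_le]
      rintro _ ⟨idx, rfl⟩
      exact memB n idx
    · intro S hS
      have hSV : InV n S := hS
      set c : BIdx n → ℝ := fun idx => match idx with
        | .inl p => (S (eb n p 1) p).re
        | .inr (⟨(i,j),_⟩, u) =>
            ![(S (eb n j 1) i).re, (S (eb n j 1) i).imI,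
              (S (eb n j 1) i).imJ, (S (eb n j 1) i).imK] u
        with hcdef
      have hRV : (∑ idx : BIdx n, c idx • famB n idx) ∈ Vsub n :=
        Submodule.sum_mem _ (fun idx _ => Submodule.smul_mem _ _ (memB n idx))
      have hSR : S = ∑ idx : BIdx n, c idx • famB n idx := by
        apply LinearMap.ext; intro X; ext1 s
        rw [repr_lemma n S hSV.2 X s, repr_lemma n _ hRV.2 X s]
        apply Finset.sum_congr rfl
        intro t _
        congr 1
        rw [eval_combo n c t s]
        by_cases hst : s = t
        · rw [dif_pos hst]; subst hst
          show S (eb n s 1) s = (S (eb n s 1) s).re • (1:ℍ)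
          rw [show ((S (eb n s 1) s).re : ℝ) • (1:ℍ) = ((S (eb n s 1) s).re : ℍ) by
            rw [← Quaternion.coe_mul_eq_smul, mul_one]]
          exact (real_diag _ (Arel n S hSV s s)).symm
        · rw [dif_neg hst]
          by_cases hlt : s < t
          · rw [dif_pos hlt]
            exact (units_span' (S (eb n t 1) s)).symm
          · have htlt : t < s := lt_of_le_of_ne (not_lt.mp hlt) (Ne.symm hst)
            rw [dif_neg hlt, dif_pos htlt]
            show S (eb n t 1) s
              = ∑ u : Fin 4, ![(S (eb n s 1) t).re, (S (eb n s 1) t).imI,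
                  (S (eb n s 1) t).imJ, (S (eb n s 1) t).imK] u • star (units4 u)
            rw [units_span_star, ← Arel n S hSV s t, star_star]
      rw [hSR]
      exact Submodule.sum_mem _ (fun idx _ =>
        Submodule.smul_mem _ _ (Submodule.subset_span ⟨idx, rfl⟩))
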